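/- arXiv:1201.0749 — 8 statements merged into one kernel-verified Lean document; each statement's English description precedes it below -/
import Mathlib

section
/- If a sudoku puzzle has at most 7 clues, then it has either zero or at least two completions; in particular no 7-clue puzzle has a unique solution. -/
/-- Row index of a cell. -/
def cellRow (c : Fin 81) : Fin 9 := ⟨c.val / 9, by omega⟩
/-- Column index of a cell. -/
def cellCol (c : Fin 81) : Fin 9 := ⟨c.val % 9, by omega⟩
/-- Box index of a cell. -/
def cellBox (c : Fin 81) : Fin 9 := ⟨(c.val / 27) * 3 + (c.val % 9) / 3, by omega⟩
/-- Cell from row and column indices. -/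
def mkCell (r c : Fin 9) : Fin 81 := ⟨r.val * 9 + c.val, by omega⟩

/-- A completed sudoku grid: no two distinct cells sharing a row, column or box
carry the same digit. -/
def IsSudoku (G : Fin 81 → Fin 9) : Prop :=
  ∀ c c' : Fin 81, c ≠ c' →
    (cellRow c = cellRow c' ∨ cellCol c = cellCol c' ∨ cellBox c = cellBox c') →
    G c ≠ G c'

/-- The graph of a grid, as a set of (cell, digit) pairs. -/
def graphOf (G : Fin 81 → Fin 9) : Set (Fin 81 × Fin 9) := {p | G p.1 = p.2}

/-- `H` is a completion of the puzzle `P`. -/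
def Completes (H : Fin 81 → Fin 9) (P : Set (Fin 81 × Fin 9)) : Prop :=
  IsSudoku H ∧ P ⊆ graphOf H

/-- `G` is the unique completion of the puzzle `P`. -/
def UniqueCompletion (G : Fin 81 → Fin 9) (P : Set (Fin 81 × Fin 9)) : Prop :=
  Completes G P ∧ ∀ H, Completes H P → H = G

/-- `U` is an unavoidable set of the grid `G`: removing `U` leaves a puzzle
with more than one completion. -/
def Unavoidable (G : Fin 81 → Fin 9) (U : Set (Fin 81 × Fin 9)) : Prop :=
  U ⊆ graphOf G ∧ ∃ H, Completes H (graphOf G \ U) ∧ H ≠ G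

/-- A minimal unavoidable set: no proper subset is unavoidable. -/
def MinUnavoidable (G : Fin 81 → Fin 9) (U : Set (Fin 81 × Fin 9)) : Prop :=
  Unavoidable G U ∧ ∀ V, V ⊂ U → ¬ Unavoidable G V

/-- Unavoidable sets of degree `k`: degree 1 means unavoidable; a nonempty set
has degree `k+1` if removing any single element leaves a set of degree `k`. -/
def UnavDeg (G : Fin 81 → Fin 9) : ℕ → Set (Fin 81 × Fin 9) → Prop
  | 0, _ => False
  | 1, U => Unavoidable G U
  | (n+2), U => U.Nonempty ∧ ∀ c ∈ U, UnavDeg G (n+1) (U \ {c})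

/-- A sudoku puzzle with at most 7 clues never has a unique
completion: it has either zero or at least two completions. -/
theorem no_proper_seven_clue_puzzle (P : Finset (Fin 81 × Fin 9)) (hP : P.card ≤ 7) :
    ¬ ∃! G : Fin 81 → Fin 9, Completes G ↑P := by
  rintro ⟨G, ⟨hGS, hGP⟩, huniq⟩
  -- two digits absent from the clues
  set D : Finset (Fin 9) := P.image Prod.snd with hD
  have hDcard : D.card ≤ 7 := le_trans (Finset.card_image_le) hP
  have hcompl : 1 < Dᶜ.card := by
    have := Finset.card_compl (s := D)
    simp only [Fintype.card_fin] at this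
    omega
  obtain ⟨a, ha, b, hb, hab⟩ := Finset.one_lt_card.mp hcompl
  have ha' : a ∉ D := Finset.mem_compl.mp ha
  have hb' : b ∉ D := Finset.mem_compl.mp hb
  -- G restricted to row 0 is surjective, so some cell has value a
  have hrow : ∀ i j : Fin 9, i ≠ j → G (mkCell 0 i) ≠ G (mkCell 0 j) := by
    intro i j hij
    apply hGS
    · simp only [mkCell, ne_eq, Fin.mk.injEq]
      omega
    · left
      simp only [cellRow, mkCell, Fin.mk.injEq]
      omega
  have hinj : Function.Injective (fun j : Fin 9 => G (mkCell 0 j)) := by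
    intro i j h
    by_contra hne
    exact hrow i j hne h
  obtain ⟨j, hj⟩ := (Finite.injective_iff_surjective.mp hinj) a
  -- the swapped grid
  set H : Fin 81 → Fin 9 := fun c => Equiv.swap a b (G c) with hHdef
  have hHS : IsSudoku H := by
    intro c c' hne hshare h
    exact hGS c c' hne hshare ((Equiv.swap a b).injective h)
  have hHP : ↑P ⊆ graphOf H := by
    intro p hp
    have hGp : G p.1 = p.2 := hGP hp
    have hp2 : p.2 ∈ D := Finset.mem_image.mpr ⟨p, hp, rfl⟩
    have h1 : p.2 ≠ a := fun h => ha' (h ▸ hp2)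
    have h2 : p.2 ≠ b := fun h => hb' (h ▸ hp2)
    simp only [graphOf, Set.mem_setOf_eq, hHdef, hGp,
      Equiv.swap_apply_of_ne_of_ne h1 h2]
  have hHG : H = G := huniq H ⟨hHS, hHP⟩
  have : H (mkCell 0 j) = b := by
    simp [hHdef, hj]
  rw [hHG] at this
  exact hab (hj.symm.trans this)
end

section
/- The map (π, ρ, σ, ℓ).[a_{i,j}] = [π(a_{ρ⁻¹(i), σ⁻¹(j)})] if ℓ is the identity of C₂, and [π(a_{σ⁻¹(j), ρ⁻¹(i)})] otherwise, defines a group action of the sudoku group (S₉ × T × T) ⋊_ψ C₂ on the set of 9×9 matrices with entries in {1,...,9}. -/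
/-- The formula (π, ρ, σ, ℓ).[a_{i,j}] = [π(a_{ρ⁻¹(i),σ⁻¹(j)})] when
ℓ = 1 and [π(a_{σ⁻¹(j),ρ⁻¹(i)})] otherwise defines a group action of the sudoku
group (S₉ × T × T) ⋊_ψ C₂ on 9×9 matrices with entries in {1,...,9}. -/
theorem sudoku_group_action
    (T : Subgroup (Equiv.Perm (Fin 9)))
    (hT : (T : Set (Equiv.Perm (Fin 9))) =
      {σ | ∀ i j : Fin 9, i.val / 3 = j.val / 3 → (σ i).val / 3 = (σ j).val / 3})
    (ψ : Multiplicative (ZMod 2) →* MulAut (Equiv.Perm (Fin 9) × T × T))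
    (hψ : ∀ n : Equiv.Perm (Fin 9) × T × T,
      ψ (Multiplicative.ofAdd (1 : ZMod 2)) n = (n.1, n.2.2, n.2.1))
    (act : ((Equiv.Perm (Fin 9) × T × T) ⋊[ψ] Multiplicative (ZMod 2)) →
      Matrix (Fin 9) (Fin 9) (Fin 9) → Matrix (Fin 9) (Fin 9) (Fin 9))
    (hact : ∀ g A (i j : Fin 9), act g A i j =
      if g.right = 1 then
        g.left.1 (A ((g.left.2.1 : Equiv.Perm (Fin 9))⁻¹ i)
          ((g.left.2.2 : Equiv.Perm (Fin 9))⁻¹ j))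
      else
        g.left.1 (A ((g.left.2.2 : Equiv.Perm (Fin 9))⁻¹ j)
          ((g.left.2.1 : Equiv.Perm (Fin 9))⁻¹ i))) :
    (∀ A, act 1 A = A) ∧ ∀ g h A, act (g * h) A = act g (act h A) := by
  have hne : (Multiplicative.ofAdd (1 : ZMod 2)) ≠ 1 := by decide
  have hsq : (Multiplicative.ofAdd (1 : ZMod 2)) * Multiplicative.ofAdd (1 : ZMod 2) = 1 := by
    decide
  have hx : ∀ x : Multiplicative (ZMod 2), x = 1 ∨ x = Multiplicative.ofAdd 1 := by decide
  constructor
  · intro A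
    funext i j
    rw [hact]
    have h1 : (1 : (Equiv.Perm (Fin 9) × T × T) ⋊[ψ] Multiplicative (ZMod 2)).right = 1 := rfl
    have h2 : (1 : (Equiv.Perm (Fin 9) × T × T) ⋊[ψ] Multiplicative (ZMod 2)).left = 1 := rfl
    simp [h1, h2]
  · intro g h A
    funext i j
    have hgl : (g * h).left = g.left * ψ g.right h.left := rfl
    have hgr : (g * h).right = g.right * h.right := rfl
    rcases hx g.right with hg | hg <;> rcases hx h.right with hh | hh <;>
      simp only [hact, hgr, hgl, hg, hh] <;>
      simp [hψ, hne, hsq, Prod.fst_mul, Prod.snd_mul, mul_inv_rev, Equiv.Perm.mul_apply]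
end

section
/- A subset X of a completed sudoku grid G hits every unavoidable set of G if and only if X (viewed as a set of clues) has G as its unique completion. -/
/-- A set of clues `X ⊆ G` hits every unavoidable set of `G` if and
only if `G` is the unique completion of `X`. -/
theorem hits_all_unavoidable_iff_unique_completion
    (G : Fin 81 → Fin 9) (hG : IsSudoku G)
    (X : Set (Fin 81 × Fin 9)) (hX : X ⊆ graphOf G) :
    (∀ U, Unavoidable G U → (X ∩ U).Nonempty) ↔ UniqueCompletion G X := by
  constructor
  · intro hhit
    refine ⟨⟨hG, hX⟩, ?_⟩
    intro H hH
    by_contra hne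
    have hU : Unavoidable G (graphOf G \ X) := by
      refine ⟨Set.diff_subset, H, ?_, hne⟩
      have : graphOf G \ (graphOf G \ X) = X := by
        rw [Set.diff_diff_right, Set.diff_self, Set.empty_union,
          Set.inter_eq_self_of_subset_right hX]
      rw [this]; exact hH
    obtain ⟨p, hpX, _, hpnX⟩ := hhit _ hU
    exact hpnX hpX
  · rintro ⟨_, huniq⟩ U ⟨hUG, H, ⟨hHs, hHsub⟩, hne⟩
    by_contra hempty
    rw [Set.not_nonempty_iff_eq_empty] at hempty
    have : X ⊆ graphOf G \ U := by
      intro p hp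
      refine ⟨hX hp, fun hpU => ?_⟩
      have : p ∈ X ∩ U := ⟨hp, hpU⟩
      simp [hempty] at this
    exact hne (huniq H ⟨hHs, this.trans hHsub⟩)
end

section
/- Every digit appearing in a minimal unavoidable set of a completed sudoku grid appears in at least two cells of that set. -/
lemma mkCell_row (r j : Fin 9) : cellRow (mkCell r j) = r := by
  simp only [cellRow, mkCell]
  exact Fin.ext (by simp; omega)

lemma mkCell_col (r j : Fin 9) : cellCol (mkCell r j) = j := by
  simp only [cellCol, mkCell]
  exact Fin.ext (by simp)

lemma cell_ext (x y : Fin 81) (h1 : cellRow x = cellRow y) (h2 : cellCol x = cellCol y) :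
    x = y := by
  simp only [cellRow, cellCol, Fin.mk.injEq] at h1 h2
  exact Fin.ext (by omega)

lemma sudoku_exists_in_row (F : Fin 81 → Fin 9) (hF : IsSudoku F) (r d : Fin 9) :
    ∃ j : Fin 9, F (mkCell r j) = d := by
  have hinj : Function.Injective (fun j : Fin 9 => F (mkCell r j)) := by
    intro a b hab
    by_contra hne
    have hcells : mkCell r a ≠ mkCell r b := by
      intro h
      exact hne (by rw [← mkCell_col r a, h, mkCell_col])
    exact hF _ _ hcells (Or.inl (by rw [mkCell_row, mkCell_row])) hab
  exact Finite.injective_iff_surjective.mp hinj d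

lemma sudoku_exists_in_col (F : Fin 81 → Fin 9) (hF : IsSudoku F) (cc d : Fin 9) :
    ∃ i : Fin 9, F (mkCell i cc) = d := by
  have hinj : Function.Injective (fun i : Fin 9 => F (mkCell i cc)) := by
    intro a b hab
    by_contra hne
    have hcells : mkCell a cc ≠ mkCell b cc := by
      intro h
      exact hne (by rw [← mkCell_row a cc, h, mkCell_row])
    exact hF _ _ hcells (Or.inr (Or.inl (by rw [mkCell_col, mkCell_col]))) hab
  exact Finite.injective_iff_surjective.mp hinj d

/-- Every digit appearing in a minimal unavoidable set appears in
at least two cells of that set. -/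
theorem minimal_unavoidable_digit_twice
    (G : Fin 81 → Fin 9) (hG : IsSudoku G)
    (U : Set (Fin 81 × Fin 9)) (hU : MinUnavoidable G U) :
    ∀ c : Fin 81, ∀ d : Fin 9, (c, d) ∈ U → ∃ c' : Fin 81, c' ≠ c ∧ (c', d) ∈ U := by
  intro c d hcd
  obtain ⟨⟨hUG, H, hHcomp, hHne⟩, hmin⟩ := hU
  have hH : IsSudoku H := hHcomp.1
  -- V : the set of (cell, G-value) pairs where H differs from G
  set V : Set (Fin 81 × Fin 9) := {p | G p.1 = p.2 ∧ H p.1 ≠ p.2} with hVdef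
  have hVU : V ⊆ U := by
    intro p hp
    by_contra hpU
    exact hp.2 (hHcomp.2 ⟨hp.1, hpU⟩)
  have hVunav : Unavoidable G V := by
    refine ⟨fun p hp => hp.1, H, ⟨hH, ?_⟩, hHne⟩
    intro p hp
    by_contra hne
    exact hp.2 ⟨hp.1, hne⟩
  have hVeq : V = U := by
    by_contra h
    exact hmin V (ssubset_of_ne_of_subset h hVU) hVunav
  have hcV : (c, d) ∈ V := hVeq ▸ hcd
  have hGc : G c = d := hcV.1
  have hHc : H c ≠ d := hcV.2
  by_contra hcon
  push_neg at hcon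
  -- assumption A: every other cell with G-value d has H-value d
  have hA : ∀ c' : Fin 81, c' ≠ c → G c' = d → H c' = d := by
    intro c' hne hGc'
    by_contra hH'
    exact hcon c' hne (hVeq ▸ (⟨hGc', hH'⟩ : (c', d) ∈ V))
  -- a cell c₃ in the column of c where H places d
  obtain ⟨i, hi⟩ := sudoku_exists_in_col H hH (cellCol c) d
  set c₃ : Fin 81 := mkCell i (cellCol c) with hc3def
  have hc3col : cellCol c₃ = cellCol c := mkCell_col i (cellCol c)
  have hc3ne : c₃ ≠ c := by
    intro h
    exact hHc (h ▸ hi)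
  -- the cell x in the row of c₃ where G places d
  obtain ⟨j, hj⟩ := sudoku_exists_in_row G hG (cellRow c₃) d
  set x : Fin 81 := mkCell (cellRow c₃) j with hxdef
  have hxrow : cellRow x = cellRow c₃ := mkCell_row (cellRow c₃) j
  have hxne : x ≠ c := by
    intro h
    have hrr : cellRow c₃ = cellRow c := by rw [← hxrow, h]
    exact hc3ne (cell_ext c₃ c hrr hc3col)
  have hHx : H x = d := hA x hxne hj
  have hxc3 : x = c₃ := by
    by_contra hne
    exact hH x c₃ hne (Or.inl hxrow) (by rw [hHx, hi])
  have hGc3 : G c₃ = d := hxc3 ▸ hj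
  exact hG c₃ c hc3ne (Or.inr (Or.inl hc3col)) (by rw [hGc3, hGc])
end

section
/- Let U be a minimal unavoidable set of a completed sudoku grid G. Then the intersection of U with any row is either empty or contains at least two cells; the same holds for columns and for 3×3 boxes. -/
/-- Cell from box and index-within-box. -/
def boxCell (b i : Fin 9) : Fin 81 :=
  ⟨(b.val / 3) * 27 + (i.val / 3) * 9 + (b.val % 3) * 3 + i.val % 3, by omega⟩
/-- Index of a cell within its box. -/
def boxIdx (c : Fin 81) : Fin 9 := ⟨(c.val / 9 % 3) * 3 + c.val % 3, by omega⟩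

lemma row_mk : ∀ r i : Fin 9, cellRow (mkCell r i) = r := by decide
lemma col_mk : ∀ r i : Fin 9, cellCol (mkCell i r) = r := by decide
lemma box_mk : ∀ b i : Fin 9, cellBox (boxCell b i) = b := by decide
lemma mk_inj : ∀ r : Fin 9, Function.Injective fun i => mkCell r i := by decide
lemma mk_inj' : ∀ r : Fin 9, Function.Injective fun i => mkCell i r := by decide
lemma box_inj : ∀ b : Fin 9, Function.Injective fun i => boxCell b i := by decide
lemma mk_row_col : ∀ c : Fin 81, mkCell (cellRow c) (cellCol c) = c := by decide
lemma box_recon : ∀ c : Fin 81, boxCell (cellBox c) (boxIdx c) = c := by decide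

/-- Two injective maps `Fin 9 → Fin 9` agreeing off a point agree at it. -/
lemma agree_of_injective (f g : Fin 9 → Fin 9) (hf : Function.Injective f)
    (hg : Function.Injective g) (a : Fin 9) (h : ∀ x, x ≠ a → f x = g x) :
    f a = g a := by
  obtain ⟨x, hx⟩ := (Finite.injective_iff_surjective.mp hg) (f a)
  by_cases hxa : x = a
  · subst hxa; exact hx.symm
  · exact absurd (hf ((h x hxa).trans hx)) hxa

/-- Key lemma: a minimal unavoidable set cannot meet a line in exactly one cell. -/
lemma key_lemma (G : Fin 81 → Fin 9) (hG : IsSudoku G)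
    (U : Set (Fin 81 × Fin 9)) (hU : MinUnavoidable G U)
    (e : Fin 9 → Fin 81) (he : Function.Injective e)
    (hline : ∀ i j : Fin 9,
      cellRow (e i) = cellRow (e j) ∨ cellCol (e i) = cellCol (e j) ∨
        cellBox (e i) = cellBox (e j))
    (p : Fin 81 × Fin 9) (hp : p ∈ U) (i0 : Fin 9) (hi0 : e i0 = p.1)
    (huniq : ∀ q ∈ U, (∃ i, e i = q.1) → q = p) : False := by
  obtain ⟨⟨hUG, H, ⟨hHsud, hHext⟩, hHG⟩, hmin⟩ := hU
  have hagree : ∀ i : Fin 9, i ≠ i0 → H (e i) = G (e i) := by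
    intro i hi
    have hnot : (e i, G (e i)) ∉ U := by
      intro hmem
      have h1 : e i = p.1 := congrArg Prod.fst (huniq _ hmem ⟨i, rfl⟩)
      exact hi (he (h1.trans hi0.symm))
    exact hHext ⟨rfl, hnot⟩
  have hinj : ∀ (F : Fin 81 → Fin 9), IsSudoku F → Function.Injective (F ∘ e) := by
    intro F hF i j hij
    by_contra hne
    exact hF (e i) (e j) (fun h => hne (he h)) (hline i j) hij
  have hkey : H p.1 = G p.1 := by
    have := agree_of_injective (H ∘ e) (G ∘ e) (hinj H hHsud) (hinj G hG) i0
      (fun x hx => hagree x hx)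
    simpa [hi0] using this
  refine hmin (U \ {p}) (Set.sdiff_singleton_ssubset.mpr hp)
    ⟨fun x hx => hUG hx.1, H, ⟨hHsud, ?_⟩, hHG⟩
  intro x hx
  by_cases hxp : x = p
  · subst hxp
    show H x.1 = x.2
    rw [hkey]; exact hUG hp
  · exact hHext ⟨hx.1, fun hxU => hx.2 ⟨hxU, hxp⟩⟩

/-- The intersection of a minimal unavoidable set with any row
(column, box) is either empty or contains at least two cells. -/
theorem minimal_unavoidable_row_col_box
    (G : Fin 81 → Fin 9) (hG : IsSudoku G)
    (U : Set (Fin 81 × Fin 9)) (hU : MinUnavoidable G U) :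
    (∀ r : Fin 9, (∃ p ∈ U, cellRow p.1 = r) →
      ∃ p ∈ U, ∃ q ∈ U, p.1 ≠ q.1 ∧ cellRow p.1 = r ∧ cellRow q.1 = r) ∧
    (∀ r : Fin 9, (∃ p ∈ U, cellCol p.1 = r) →
      ∃ p ∈ U, ∃ q ∈ U, p.1 ≠ q.1 ∧ cellCol p.1 = r ∧ cellCol q.1 = r) ∧
    (∀ r : Fin 9, (∃ p ∈ U, cellBox p.1 = r) →
      ∃ p ∈ U, ∃ q ∈ U, p.1 ≠ q.1 ∧ cellBox p.1 = r ∧ cellBox q.1 = r) := by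
  have hUG : U ⊆ graphOf G := hU.1.1
  refine ⟨?_, ?_, ?_⟩
  · rintro r ⟨p, hpU, hpr⟩
    by_contra hcon
    push_neg at hcon
    refine key_lemma G hG U hU (fun i => mkCell r i) (mk_inj r)
      (fun i j => Or.inl ((row_mk r i).trans (row_mk r j).symm))
      p hpU (cellCol p.1) (by rw [← hpr]; exact mk_row_col p.1) ?_
    rintro q hqU ⟨i, hi⟩
    have hqr : cellRow q.1 = r := by rw [← hi]; exact row_mk r i
    by_cases h : p.1 = q.1
    · have hp2 := hUG hpU; have hq2 := hUG hqU
      simp only [graphOf, Set.mem_setOf_eq] at hp2 hq2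
      exact (Prod.ext h (by rw [← hp2, ← hq2, h])).symm
    · exact absurd hqr (hcon p hpU q hqU h hpr)
  · rintro r ⟨p, hpU, hpr⟩
    by_contra hcon
    push_neg at hcon
    refine key_lemma G hG U hU (fun i => mkCell i r) (mk_inj' r)
      (fun i j => Or.inr (Or.inl ((col_mk r i).trans (col_mk r j).symm)))
      p hpU (cellRow p.1) (by rw [← hpr]; exact mk_row_col p.1) ?_
    rintro q hqU ⟨i, hi⟩
    have hqr : cellCol q.1 = r := by rw [← hi]; exact col_mk r i
    by_cases h : p.1 = q.1
    · have hp2 := hUG hpU; have hq2 := hUG hqU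
      simp only [graphOf, Set.mem_setOf_eq] at hp2 hq2
      exact (Prod.ext h (by rw [← hp2, ← hq2, h])).symm
    · exact absurd hqr (hcon p hpU q hqU h hpr)
  · rintro r ⟨p, hpU, hpr⟩
    by_contra hcon
    push_neg at hcon
    refine key_lemma G hG U hU (fun i => boxCell r i) (box_inj r)
      (fun i j => Or.inr (Or.inr ((box_mk r i).trans (box_mk r j).symm)))
      p hpU (boxIdx p.1) (by rw [← hpr]; exact box_recon p.1) ?_
    rintro q hqU ⟨i, hi⟩
    have hqr : cellBox q.1 = r := by rw [← hi]; exact box_mk r i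
    by_cases h : p.1 = q.1
    · have hp2 := hUG hpU; have hq2 := hUG hqU
      simp only [graphOf, Set.mem_setOf_eq] at hp2 hq2
      exact (Prod.ext h (by rw [← hp2, ← hq2, h])).symm
    · exact absurd hqr (hcon p hpU q hqU h hpr)
end

section
/- If H ≠ G is another completion of G \ U for a minimal unavoidable set U, then the map sending each cell of U to the cell of H carrying its digit (restricted to any single row of U) induces a derangement: no cell of U carries the same digit in G and H. -/
/-- If `H ≠ G` is another completion of `G \ U` for a minimal
unavoidable set `U`, then `H` derange the cells of `U` within each row: no cell
of `U` carries the same digit in `G` and `H`, and the digit of each cell of `U`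
moves to another cell of `U` in the same row. -/
theorem minimal_unavoidable_derangement
    (G : Fin 81 → Fin 9) (hG : IsSudoku G)
    (U : Set (Fin 81 × Fin 9)) (hU : MinUnavoidable G U)
    (H : Fin 81 → Fin 9) (hH : Completes H (graphOf G \ U)) (hne : H ≠ G) :
    ∀ c : Fin 81, ∀ d : Fin 9, (c, d) ∈ U →
      H c ≠ G c ∧
      ∃ c' : Fin 81, c' ≠ c ∧ cellRow c' = cellRow c ∧
        (∃ d' : Fin 9, (c', d') ∈ U) ∧ H c' = G c := by

  intro c d hcd
  have hUG : U ⊆ graphOf G := hU.1.1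
  have hd : d = G c := (hUG hcd).symm
  subst hd
  have hHc : H c ≠ G c := by
    intro heq
    apply hU.2 (U \ {(c, G c)}) (Set.sdiff_singleton_ssubset.mpr hcd)
    constructor
    · exact fun p hp => hUG hp.1
    · refine ⟨H, ⟨hH.1, ?_⟩, hne⟩
      intro p hp
      by_cases hpU : p ∈ U
      · have hp2 : p = (c, G c) := by
          by_contra hne'
          exact hp.2 ⟨hpU, hne'⟩
        rw [hp2]
        exact heq
      · exact hH.2 ⟨hp.1, hpU⟩
  refine ⟨hHc, ?_⟩
  have hinj : Function.Injective (fun i : Fin 9 => H (mkCell (cellRow c) i)) := by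
    intro i j hij
    by_contra hne'
    have hij' : i.val ≠ j.val := fun h => hne' (Fin.ext h)
    have hcells : mkCell (cellRow c) i ≠ mkCell (cellRow c) j := by
      intro h
      have := congrArg Fin.val h
      simp only [mkCell] at this
      omega
    have hrows : cellRow (mkCell (cellRow c) i) = cellRow (mkCell (cellRow c) j) := by
      simp only [cellRow, mkCell, Fin.ext_iff]
      omega
    exact hH.1 _ _ hcells (Or.inl hrows) hij
  obtain ⟨i, hi⟩ := (Finite.injective_iff_surjective.mp hinj) (G c)
  set c' := mkCell (cellRow c) i with hc'
  have hi' : H c' = G c := hi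
  have hrow : cellRow c' = cellRow c := by
    have : (cellRow c).val < 9 := (cellRow c).isLt
    simp only [hc', cellRow, mkCell, Fin.ext_iff]
    omega
  have hcc : c' ≠ c := fun h => hHc (h ▸ hi')
  refine ⟨c', hcc, hrow, ?_, hi'⟩
  by_contra hnotU
  push_neg at hnotU
  have hHG : H c' = G c' := hH.2 ⟨rfl, hnotU _⟩
  exact hG c' c hcc (Or.inl hrow) (hHG.symm.trans hi')
end

section
/- If U is an unavoidable set of degree k and V is an unavoidable set of degree ℓ in the same completed sudoku grid G, and U ∩ V = ∅, then U ∪ V is an unavoidable set of degree k + ℓ. -/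
lemma graph_subset_eq {G H : Fin 81 → Fin 9} (h : graphOf G ⊆ graphOf H) : H = G := by
  funext c
  exact h (show (c, G c) ∈ graphOf G from rfl)

lemma unavoidable_mono (G : Fin 81 → Fin 9) {W W' : Set (Fin 81 × Fin 9)}
    (h : Unavoidable G W) (hsub : W ⊆ W') (hg : W' ⊆ graphOf G) :
    Unavoidable G W' := by
  obtain ⟨hWg, H, ⟨hS, hHsub⟩, hne⟩ := h
  exact ⟨hg, H, ⟨hS, fun p hp => hHsub ⟨hp.1, fun hpW => hp.2 (hsub hpW)⟩⟩, hne⟩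

lemma not_unavDeg_empty (G : Fin 81 → Fin 9) (m : ℕ) : ¬ UnavDeg G m ∅ := by
  match m with
  | 0 => exact fun h => h
  | 1 =>
    rintro ⟨-, H, ⟨hS, hsub⟩, hne⟩
    apply hne
    apply graph_subset_eq
    intro p hp
    exact hsub ⟨hp, fun h => h⟩
  | (n+2) =>
    rintro ⟨⟨c, hc⟩, -⟩
    exact hc

lemma unavDeg_nonempty (G : Fin 81 → Fin 9) {m : ℕ} {W : Set (Fin 81 × Fin 9)}
    (h : UnavDeg G m W) : W.Nonempty := by
  rcases W.eq_empty_or_nonempty with rfl | hne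
  · exact absurd h (not_unavDeg_empty G m)
  · exact hne

lemma unavDeg_mono (G : Fin 81 → Fin 9) :
    ∀ m (W W' : Set (Fin 81 × Fin 9)), UnavDeg G m W → W ⊆ W' → W' ⊆ graphOf G →
      UnavDeg G m W' := by
  intro m
  induction m using Nat.strong_induction_on with
  | _ m IH =>
    match m with
    | 0 => exact fun W W' h _ _ => h.elim
    | 1 => exact fun W W' h hsub hg => unavoidable_mono G h hsub hg
    | (n+2) =>
      intro W W' h hsub hg
      obtain ⟨hne, hrem⟩ := h
      refine ⟨hne.mono hsub, fun c hc => ?_⟩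
      have hW'c : W' \ {c} ⊆ graphOf G := fun p hp => hg hp.1
      by_cases hcW : c ∈ W
      · exact IH (n+1) (by omega) _ _ (hrem c hcW) (Set.diff_subset_diff_left hsub) hW'c
      · -- W ⊆ W' \ {c}; first lower degree of W to n+1
        obtain ⟨d, hd⟩ := hne
        have hWdeg : UnavDeg G (n+1) W :=
          IH (n+1) (by omega) _ _ (hrem d hd) Set.diff_subset (fun p hp => hg (hsub hp))
        exact IH (n+1) (by omega) _ _ hWdeg
          (fun p hp => ⟨hsub hp, fun he => hcW (he ▸ hp)⟩) hW'c

lemma unavDeg_subset_graph (G : Fin 81 → Fin 9) :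
    ∀ m (W : Set (Fin 81 × Fin 9)), UnavDeg G m W → W ⊆ graphOf G := by
  intro m
  induction m using Nat.strong_induction_on with
  | _ m IH =>
    match m with
    | 0 => exact fun W h => h.elim
    | 1 => exact fun W h => h.1
    | (n+2) =>
      rintro W ⟨hne, hrem⟩ x hx
      by_cases hex : ∃ c ∈ W, c ≠ x
      · obtain ⟨c, hc, hcx⟩ := hex
        exact IH (n+1) (by omega) _ (hrem c hc) ⟨hx, fun h => hcx (h.symm)⟩
      · push_neg at hex
        have hWx : W \ {x} = ∅ := by
          ext y; simp only [Set.mem_diff, Set.mem_singleton_iff, Set.mem_empty_iff_false,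
            iff_false, not_and, not_not]
          exact fun hy => hex y hy
        have := hrem x hx
        rw [hWx] at this
        exact absurd this (not_unavDeg_empty G (n+1))

lemma unavDeg_union_disjoint_aux (G : Fin 81 → Fin 9) :
    ∀ n k l (U V : Set (Fin 81 × Fin 9)), k + l = n →
      UnavDeg G k U → UnavDeg G l V → Disjoint U V →
      UnavDeg G (k + l) (U ∪ V) := by
  intro n
  induction n using Nat.strong_induction_on with
  | _ n IH =>
    intro k l U V hn hU hV hdisj
    match k, l with
    | 0, _ => exact hU.elim
    | _+1, 0 => exact hV.elim
    | k'+1, l'+1 =>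
      have hUg : U ⊆ graphOf G := unavDeg_subset_graph G _ U hU
      have hVg : V ⊆ graphOf G := unavDeg_subset_graph G _ V hV
      have hUVg : U ∪ V ⊆ graphOf G := Set.union_subset hUg hVg
      have hgoal : k' + 1 + (l' + 1) = (k' + l') + 2 := by omega
      rw [hgoal]
      refine ⟨(unavDeg_nonempty G hU).mono Set.subset_union_left, fun c hc => ?_⟩
      have hsubg : (U ∪ V) \ {c} ⊆ graphOf G := fun p hp => hUVg hp.1
      rcases hc with hcU | hcV
      · have hcV : c ∉ V := fun h => (hdisj.le_bot ⟨hcU, h⟩ : False)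
        have heq : (U ∪ V) \ {c} = (U \ {c}) ∪ V := by
          ext p
          simp only [Set.mem_diff, Set.mem_union, Set.mem_singleton_iff]
          constructor
          · rintro ⟨hp | hp, hpc⟩
            · exact Or.inl ⟨hp, hpc⟩
            · exact Or.inr hp
          · rintro (⟨hp, hpc⟩ | hp)
            · exact ⟨Or.inl hp, hpc⟩
            · exact ⟨Or.inr hp, fun he => hcV (he ▸ hp)⟩
        cases k' with
        | zero =>
          rw [show 0 + l' + 1 = l' + 1 by omega]
          exact unavDeg_mono G (l'+1) V _ hV
            (fun p hp => ⟨Or.inr hp, fun he => hcV (he ▸ hp)⟩) hsubg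
        | succ m =>
          have hU' : UnavDeg G (m+1) (U \ {c}) := hU.2 c hcU
          have hdisj' : Disjoint (U \ {c}) V := hdisj.mono_left Set.diff_subset
          have := IH ((m+1)+(l'+1)) (by omega) (m+1) (l'+1) (U \ {c}) V rfl hU' hV hdisj'
          rw [heq, show m + 1 + l' + 1 = (m+1)+(l'+1) by omega]
          exact this
      · have hcU : c ∉ U := fun h => (hdisj.le_bot ⟨h, hcV⟩ : False)
        have heq : (U ∪ V) \ {c} = U ∪ (V \ {c}) := by
          ext p
          simp only [Set.mem_diff, Set.mem_union, Set.mem_singleton_iff]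
          constructor
          · rintro ⟨hp | hp, hpc⟩
            · exact Or.inl hp
            · exact Or.inr ⟨hp, hpc⟩
          · rintro (hp | ⟨hp, hpc⟩)
            · exact ⟨Or.inl hp, fun he => hcU (he ▸ hp)⟩
            · exact ⟨Or.inr hp, hpc⟩
        cases l' with
        | zero =>
          rw [show k' + 0 + 1 = k' + 1 by omega]
          exact unavDeg_mono G (k'+1) U _ hU
            (fun p hp => ⟨Or.inl hp, fun he => hcU (he ▸ hp)⟩) hsubg
        | succ m =>
          have hV' : UnavDeg G (m+1) (V \ {c}) := hV.2 c hcV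
          have hdisj' : Disjoint U (V \ {c}) := hdisj.mono_right Set.diff_subset
          have := IH ((k'+1)+(m+1)) (by omega) (k'+1) (m+1) U (V \ {c}) rfl hU hV' hdisj'
          rw [heq, show k' + (m + 1) + 1 = (k'+1)+(m+1) by omega]
          exact this

/-- The disjoint union of an unavoidable set of degree `k` and an
unavoidable set of degree `ℓ` is unavoidable of degree `k + ℓ`. -/
theorem unavDeg_union_disjoint
    (G : Fin 81 → Fin 9) (hG : IsSudoku G)
    (U V : Set (Fin 81 × Fin 9)) (k l : ℕ)
    (hU : UnavDeg G k U) (hV : UnavDeg G l V) (hdisj : Disjoint U V) :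
    UnavDeg G (k + l) (U ∪ V) := by
  exact unavDeg_union_disjoint_aux G (k + l) k l U V rfl hU hV hdisj
end

section
/- If a completed sudoku grid G can be partitioned into m pairwise disjoint unavoidable sets of degree 2 each, then every proper puzzle for G has at least 2m clues. In particular, a grid partitioned into nine disjoint degree-2 unavoidable sets requires at least 18 clues. -/
lemma hit_unavoidable (G : Fin 81 → Fin 9) (P : Set (Fin 81 × Fin 9))
    (hP : UniqueCompletion G P) (V : Set (Fin 81 × Fin 9))
    (hV : Unavoidable G V) : (P ∩ V).Nonempty := by
  by_contra h
  rw [Set.not_nonempty_iff_eq_empty] at h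
  obtain ⟨hVsub, H, hHcomp, hHne⟩ := hV
  obtain ⟨⟨hGsud, hPsub⟩, huniq⟩ := hP
  refine hHne (huniq H ⟨hHcomp.1, fun p hp => hHcomp.2 ⟨hPsub hp, fun hpV => ?_⟩⟩)
  exact Set.eq_empty_iff_forall_notMem.mp h p ⟨hp, hpV⟩

lemma two_le_inter (G : Fin 81 → Fin 9) (P : Set (Fin 81 × Fin 9))
    (hP : UniqueCompletion G P) (V : Set (Fin 81 × Fin 9))
    (hV : UnavDeg G 2 V) : 2 ≤ (P ∩ V).ncard := by
  obtain ⟨hne, hrem⟩ := hV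
  obtain ⟨c0, hc0⟩ := hne
  obtain ⟨p1, hp1P, hp1V, _⟩ := hit_unavoidable G P hP _ (hrem c0 hc0)
  obtain ⟨p2, hp2P, hp2V, hp2ne⟩ := hit_unavoidable G P hP _ (hrem p1 hp1V)
  exact (Set.one_lt_ncard_iff (Set.toFinite _)).mpr
    ⟨p2, p1, ⟨hp2P, hp2V⟩, ⟨hp1P, hp1V⟩, hp2ne⟩

/-- If a completed grid `G` is partitioned into `m` pairwise
disjoint unavoidable sets of degree 2, then every proper puzzle for `G` has at
least `2m` clues; in particular nine such sets force at least 18 clues. -/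
theorem partition_into_degree_two_lower_bound
    (G : Fin 81 → Fin 9) (hG : IsSudoku G)
    (m : ℕ) (U : Fin m → Set (Fin 81 × Fin 9))
    (hdisj : Pairwise fun i j => Disjoint (U i) (U j))
    (hcover : ⋃ i, U i = graphOf G)
    (hdeg : ∀ i, UnavDeg G 2 (U i)) :
    ∀ P : Set (Fin 81 × Fin 9), UniqueCompletion G P → 2 * m ≤ P.ncard := by
  intro P hP
  classical
  set F : Fin m → Finset (Fin 81 × Fin 9) := fun i => (P ∩ U i).toFinset with hF
  have hdisjF : ∀ i ∈ Finset.univ, ∀ j ∈ Finset.univ, i ≠ j → Disjoint (F i) (F j) := by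
    intro i _ j _ hij
    simp only [hF, Set.disjoint_toFinset]
    exact (hdisj hij).mono Set.inter_subset_right Set.inter_subset_right
  have hsub : Finset.univ.biUnion F ⊆ P.toFinset := by
    intro p hp
    simp only [Finset.mem_biUnion, hF, Set.mem_toFinset] at hp ⊢
    obtain ⟨i, _, hpi, _⟩ := hp
    exact hpi
  calc 2 * m = ∑ _i : Fin m, 2 := by simp [mul_comm]
    _ ≤ ∑ i : Fin m, (F i).card := by
        refine Finset.sum_le_sum fun i _ => ?_
        have h2 := two_le_inter G P hP (U i) (hdeg i)
        rwa [Set.ncard_eq_toFinset_card'] at h2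
    _ = (Finset.univ.biUnion F).card := (Finset.card_biUnion hdisjF).symm
    _ ≤ P.toFinset.card := Finset.card_le_card hsub
    _ = P.ncard := (Set.ncard_eq_toFinset_card' P).symm
end
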